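/- arXiv:2110.06482 — 5 statements merged into one kernel-verified Lean document; each statement's English description precedes it below -/
import Mathlib

section
/- Let A be an n×n positive semidefinite real matrix and let 0 < p < 1. Then the sum of the p-th powers of the diagonal entries of A is at least the sum of the p-th powers of the eigenvalues of A, i.e., ∑_{i=1}^n A_{ii}^p ≥ ∑_{i=1}^n λ_i(A)^p. -/
/-!
With `U` a unitary matrix of eigenvectors, `A i i = ∑ j |U i j|² λ j`, and the matrix
`(|U i j|²)` is doubly stochastic. For a concave `f` and a doubly stochastic `M`, Jensen's
inequality along each row followed by summing the column sums gives
`∑ j f (λ j) ≤ ∑ i f ((M λ) i)`; apply this to `f = (·) ^ p` on `[0, ∞)`.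
-/

open Finset Matrix

theorem ConcaveOn.sum_le_sum_mulVec_of_mem_doublyStochastic {n 𝕜 β : Type*} [Fintype n]
    [DecidableEq n] [Field 𝕜] [LinearOrder 𝕜] [IsStrictOrderedRing 𝕜] [AddCommGroup β]
    [PartialOrder β] [IsOrderedAddMonoid β] [Module 𝕜 β] [IsStrictOrderedModule 𝕜 β]
    {s : Set 𝕜} {f : 𝕜 → β} (hf : ConcaveOn 𝕜 s f) {M : Matrix n n 𝕜}
    (hM : M ∈ doublyStochastic 𝕜 n) {x : n → 𝕜} (hx : ∀ j, x j ∈ s) :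
    ∑ j, f (x j) ≤ ∑ i, f ((M *ᵥ x) i) :=
  calc ∑ j, f (x j) = ∑ i, ∑ j, M i j • f (x j) := by
        rw [sum_comm]
        simp [← sum_smul, sum_col_of_mem_doublyStochastic hM]
    _ ≤ ∑ i, f (∑ j, M i j • x j) := sum_le_sum fun i _ ↦
        hf.le_map_sum (fun _ _ ↦ nonneg_of_mem_doublyStochastic hM)
          (sum_row_of_mem_doublyStochastic hM i) fun j _ ↦ hx j
    _ = ∑ i, f ((M *ᵥ x) i) := by simp [mulVec, dotProduct]

namespace Matrix

variable {n 𝕜 : Type*} [Fintype n] [DecidableEq n] [RCLike 𝕜]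

theorem of_norm_sq_mem_doublyStochastic {U : Matrix n n 𝕜} (hU : U ∈ unitaryGroup n 𝕜) :
    of (fun i j ↦ ‖U i j‖ ^ 2) ∈ doublyStochastic ℝ n := by
  refine mem_doublyStochastic_iff_sum.mpr ⟨fun _ _ ↦ sq_nonneg _, fun i ↦ ?_, fun j ↦ ?_⟩
  · have h := congr_fun₂ (mem_unitaryGroup_iff.mp hU) i i
    simp only [mul_apply, star_apply, RCLike.star_def, RCLike.mul_conj, one_apply_eq] at h
    exact_mod_cast h
  · have h := congr_fun₂ (mem_unitaryGroup_iff'.mp hU) j j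
    simp only [mul_apply, star_apply, RCLike.star_def, RCLike.conj_mul, one_apply_eq] at h
    exact_mod_cast h

theorem IsHermitian.apply_self_eq_mulVec_eigenvalues {A : Matrix n n 𝕜} (hA : A.IsHermitian)
    (i : n) :
    A i i = ((of (fun i j ↦ ‖hA.eigenvectorUnitary i j‖ ^ 2) *ᵥ hA.eigenvalues) i : ℝ) := by
  conv_lhs => rw [hA.spectral_theorem]
  simp only [Unitary.conjStarAlgAut_apply, mul_apply, diagonal_apply, star_apply, mulVec,
    dotProduct, of_apply, RCLike.ofReal_sum, RCLike.ofReal_mul, RCLike.ofReal_pow,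
    ← RCLike.mul_conj]
  refine sum_congr rfl fun j _ ↦ ?_
  simp only [mul_ite, mul_zero, sum_ite_eq', mem_univ, if_true, Function.comp_apply,
    RCLike.star_def]
  ring

end Matrix

/-- For an n×n real positive semidefinite matrix `A` and `0 < p < 1`,
the sum of the p-th powers of the diagonal entries of `A` is at least the sum of the
p-th powers of the eigenvalues of `A`. -/
theorem diag_rpow_sum_ge_eigenvalues_rpow_sum
    (n : ℕ) (A : Matrix (Fin n) (Fin n) ℝ) (hA : A.PosSemidef)
    (p : ℝ) (hp0 : 0 < p) (hp1 : p < 1) :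
    ∑ i, (A i i) ^ p ≥ ∑ i, (hA.1.eigenvalues i) ^ p := by
  have hdiag (i : Fin n) := hA.1.apply_self_eq_mulVec_eigenvalues i
  simp only [RCLike.ofReal_real_eq_id, id] at hdiag
  simpa only [hdiag] using
    (Real.concaveOn_rpow hp0.le hp1.le).sum_le_sum_mulVec_of_mem_doublyStochastic
      (of_norm_sq_mem_doublyStochastic hA.1.eigenvectorUnitary.2) hA.eigenvalues_nonneg
end

section
/- Let W ∈ ℝ^{d×K} have rank r and SVD W = UΣVᵀ with Σ ∈ ℝ^{r×r}. Define W_i = U_{i−1} Σ^{1/L} U_iᵀ for i = 1,...,L where U_0 = U, U_L = V, and each U_i ∈ ℝ^{r×m_i} has orthonormal columns (U_iᵀU_i = I). Then W₁W₂⋯W_L = W and ∑_{i=1}^L ‖W_i‖_F² = L·∑_{j=1}^r σ_j(W)^{2/L}. -/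
open Matrix

/-- Squared Frobenius norm. -/
noncomputable def frobSq {a b : ℕ} (M : Matrix (Fin a) (Fin b) ℝ) : ℝ := ∑ i, ∑ j, (M i j) ^ 2

lemma frobSq_eq_trace {a b : ℕ} (M : Matrix (Fin a) (Fin b) ℝ) :
    frobSq M = (Mᵀ * M).trace := by
  unfold frobSq
  rw [Matrix.trace, Finset.sum_comm]
  congr 1; ext j
  simp [Matrix.mul_apply, Matrix.diag, sq]


/-- Product `W₁ * W₂ * ⋯ * W_L` of a chain of matrices of compatible sizes. -/
noncomputable def chainProd : {L : ℕ} → (m : Fin (L + 1) → ℕ) →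
    ((i : Fin L) → Matrix (Fin (m i.castSucc)) (Fin (m i.succ)) ℝ) →
    Matrix (Fin (m 0)) (Fin (m (Fin.last L))) ℝ
  | 0, m, _ => (1 : Matrix (Fin (m 0)) (Fin (m 0)) ℝ)
  | (L + 1), m, W =>
      chainProd (fun i : Fin (L + 1) => m i.castSucc) (fun i : Fin L => W i.castSucc)
        * W (Fin.last L)

lemma gen_step {r a b c : ℕ} (d : Fin r → ℝ) (A : Matrix (Fin a) (Fin r) ℝ)
    (B : Matrix (Fin b) (Fin r) ℝ) (C : Matrix (Fin c) (Fin r) ℝ)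
    (hB : Bᵀ * B = 1) (k : ℕ) :
    A * Matrix.diagonal d ^ k * Bᵀ * (B * Matrix.diagonal d * Cᵀ) =
      A * Matrix.diagonal d ^ (k + 1) * Cᵀ := by
  have h2 : Bᵀ * (B * (Matrix.diagonal d * Cᵀ)) = Matrix.diagonal d * Cᵀ := by
    rw [← Matrix.mul_assoc, hB, Matrix.one_mul]
  simp only [Matrix.mul_assoc, pow_succ, h2]

lemma chain_lemma (r : ℕ) (d : Fin r → ℝ) :
    ∀ (L : ℕ) (m : Fin (L + 1 + 1) → ℕ)
    (Us : (i : Fin (L + 1 + 1)) → Matrix (Fin (m i)) (Fin r) ℝ)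
    (_ : ∀ i, (Us i)ᵀ * Us i = 1)
    (Ws : (i : Fin (L + 1)) → Matrix (Fin (m i.castSucc)) (Fin (m i.succ)) ℝ)
    (_ : ∀ i, Ws i = Us i.castSucc * Matrix.diagonal d * (Us i.succ)ᵀ),
    chainProd m Ws = Us 0 * (Matrix.diagonal d) ^ (L + 1) * (Us (Fin.last (L + 1)))ᵀ := by
  intro L
  induction L with
  | zero =>
      intro m Us hUs Ws hWs
      have h1 : chainProd m Ws =
          (1 : Matrix (Fin (m (Fin.last 0).castSucc)) (Fin (m (Fin.last 0).castSucc)) ℝ)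
            * Ws (Fin.last 0) := rfl
      rw [h1, Matrix.one_mul, hWs, pow_one]
      rfl
  | succ L ih =>
      intro m Us hUs Ws hWs
      have hc : chainProd m Ws =
          chainProd (fun i : Fin (L+1+1) => m i.castSucc) (fun i : Fin (L+1) => Ws i.castSucc)
            * Ws (Fin.last (L+1)) := rfl
      rw [hc, ih (fun i => m i.castSucc) (fun i => Us i.castSucc) (fun i => hUs i.castSucc)
          (fun i => Ws i.castSucc) (fun i => hWs i.castSucc), hWs]
      exact gen_step d (Us (Fin.castSucc 0)) (Us (Fin.last (L+1)).castSucc)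
        (Us (Fin.last (L+1)).succ) (hUs _) (L+1)


/-- Let `W` have rank `r` and SVD `W = U Σ Vᵀ` (here `U = Us 0`,
`V = Us (Fin.last L)`, `Σ = diagonal σ` with `σ > 0`). Given semi-orthogonal matrices
`Us i ∈ ℝ^{m_i × r}` (`Us iᵀ Us i = I`), the factors `W_i = Us (i-1) Σ^{1/L} Us iᵀ`
satisfy `W₁ W₂ ⋯ W_L = W` and `∑ ‖W_i‖_F² = L · ∑_j σ_j(W)^{2/L}`. -/
theorem balanced_factorization_construction
    (L r : ℕ) (hL : 1 ≤ L) (m : Fin (L + 1) → ℕ) (hm : ∀ i, r ≤ m i)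
    (σ : Fin r → ℝ) (hσ : ∀ j, 0 < σ j)
    (Us : (i : Fin (L + 1)) → Matrix (Fin (m i)) (Fin r) ℝ)
    (hUs : ∀ i, (Us i)ᵀ * Us i = 1)
    (W : Matrix (Fin (m 0)) (Fin (m (Fin.last L))) ℝ)
    (hW : W = Us 0 * Matrix.diagonal σ * (Us (Fin.last L))ᵀ)
    (hr : W.rank = r)
    (Ws : (i : Fin L) → Matrix (Fin (m i.castSucc)) (Fin (m i.succ)) ℝ)
    (hWs : ∀ i, Ws i =
      Us i.castSucc * Matrix.diagonal (fun j => σ j ^ ((1 : ℝ) / L)) * (Us i.succ)ᵀ) :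
    chainProd m Ws = W ∧
    ∑ i, frobSq (Ws i) = (L : ℝ) * ∑ j, σ j ^ ((2 : ℝ) / L) := by
  have hL0 : (L : ℝ) ≠ 0 := Nat.cast_ne_zero.mpr (by omega)
  set d : Fin r → ℝ := fun j => σ j ^ ((1 : ℝ) / L) with hd
  constructor
  · obtain ⟨L', rfl⟩ : ∃ L', L = L' + 1 := ⟨L - 1, by omega⟩
    rw [chain_lemma r d L' m Us hUs Ws hWs, hW]
    congr 1
    congr 1
    rw [Matrix.diagonal_pow]
    have hds : d ^ (L' + 1) = σ := by
      funext j
      show d j ^ (L' + 1) = σ j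
      have hdj : d j = σ j ^ ((1 : ℝ) / ((L' + 1 : ℕ) : ℝ)) := rfl
      rw [hdj, ← Real.rpow_natCast (σ j ^ ((1:ℝ)/((L'+1:ℕ):ℝ))) (L' + 1),
        ← Real.rpow_mul (hσ j).le, one_div_mul_cancel hL0, Real.rpow_one]
    rw [hds]
  · have hfi : ∀ i, frobSq (Ws i) = ∑ j, σ j ^ ((2 : ℝ) / L) := by
      intro i
      rw [frobSq_eq_trace, hWs i]
      have hdT : (Matrix.diagonal d)ᵀ = Matrix.diagonal d := Matrix.diagonal_transpose d
      have h1 : (Us i.castSucc * Matrix.diagonal d * (Us i.succ)ᵀ)ᵀ *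
          (Us i.castSucc * Matrix.diagonal d * (Us i.succ)ᵀ) =
          Us i.succ * (Matrix.diagonal d * Matrix.diagonal d) * (Us i.succ)ᵀ := by
        rw [Matrix.transpose_mul, Matrix.transpose_mul, hdT, Matrix.transpose_transpose]
        have h2 : (Us i.castSucc)ᵀ * (Us i.castSucc * (Matrix.diagonal d * (Us i.succ)ᵀ)) =
            Matrix.diagonal d * (Us i.succ)ᵀ := by
          rw [← Matrix.mul_assoc ((Us i.castSucc)ᵀ), hUs, Matrix.one_mul]
        simp only [Matrix.mul_assoc, h2]
      rw [h1, Matrix.trace_mul_comm, ← Matrix.mul_assoc, hUs, Matrix.one_mul,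
        Matrix.diagonal_mul_diagonal, Matrix.trace_diagonal]
      congr 1
      funext j
      show d j * d j = σ j ^ ((2 : ℝ) / L)
      have hdj : d j = σ j ^ ((1 : ℝ) / (L : ℝ)) := rfl
      rw [hdj, ← Real.rpow_add (hσ j)]
      congr 1
      ring
    rw [Finset.sum_congr rfl (fun i _ => hfi i), Finset.sum_const, Finset.card_univ,
      Fintype.card_fin, nsmul_eq_mul]
end

section
/- Let X ∈ ℝ^{N×d} and Y ∈ ℝ^{N×K}, and suppose there exists W with XW = Y. Then the minimum of ‖W‖_{S_{2/L}}^{2/L} over all W satisfying XW = Y is attained at W = X†Y, and the minimum value is ‖X†Y‖_{S_{2/L}}^{2/L}. -/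
open Matrix

/-- The `j`-th singular value (unsorted) of a real matrix. -/
noncomputable def singVal {a b : ℕ} (M : Matrix (Fin a) (Fin b) ℝ) (j : Fin b) : ℝ :=
  Real.sqrt ((Matrix.isHermitian_conjTranspose_mul_self M).eigenvalues j)

/-- `Xd` is the Moore–Penrose pseudoinverse of `X` (the four Penrose conditions). -/
def IsMoorePenrose {a b : ℕ} (X : Matrix (Fin a) (Fin b) ℝ) (Xd : Matrix (Fin b) (Fin a) ℝ) : Prop :=
  X * Xd * X = X ∧ Xd * X * Xd = Xd ∧ (X * Xd)ᵀ = X * Xd ∧ (Xd * X)ᵀ = Xd * X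

/-!
Every solution of `X W = Y` satisfies `X† Y = P W` with `P = X† X` an orthogonal projection, and
`X (X† Y) = Y` because `Y` lies in the range of `X`. So it suffices that left multiplication by a
projection does not increase the singular values: `Wᴴ W - (P W)ᴴ (P W) = ((1 - P) W)ᴴ ((1 - P) W)`
is positive semidefinite, and by Weyl's monotonicity principle the `k`-th largest eigenvalue of a
Hermitian matrix can only grow when a positive semidefinite matrix is added. Weyl's principle is
the dimension count of Courant–Fischer: if `S - T` is positive, the span of the top `k + 1`
eigenvectors of `T` meets the span of the bottom `n - k` eigenvectors of `S` in a nonzero vector,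
whose Rayleigh quotients for `T` and `S` are squeezed between the two `k`-th eigenvalues.
-/

open Module Submodule RCLike
open scoped InnerProductSpace

namespace OrthonormalBasis

variable {ι 𝕜 E : Type*} [Fintype ι] [RCLike 𝕜] [NormedAddCommGroup E] [InnerProductSpace 𝕜 E]

theorem finrank_span_image (b : OrthonormalBasis ι 𝕜 E) (s : Finset ι) :
    finrank 𝕜 (span 𝕜 (b '' s)) = s.card := by
  rw [Set.image_eq_range, ← Function.comp_def b Subtype.val,
    finrank_span_eq_card (b.orthonormal.linearIndependent.comp _ Subtype.val_injective)]
  simp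

theorem repr_eq_zero_of_mem_span_image (b : OrthonormalBasis ι 𝕜 E) {s : Set ι} {x : E}
    (hx : x ∈ span 𝕜 (b '' s)) {j : ι} (hj : j ∉ s) : b.repr x j = 0 := by
  have hle : span 𝕜 (b '' s) ≤ (𝕜 ∙ b j)ᗮ := by
    rw [span_le]
    rintro _ ⟨i, hi, rfl⟩
    exact mem_orthogonal_singleton_iff_inner_right.mpr
      (b.orthonormal.2 fun hji => hj (hji ▸ hi))
  rw [b.repr_apply_apply]
  exact mem_orthogonal_singleton_iff_inner_right.mp (hle hx)

theorem sum_mul_norm_repr_sq_le_of_mem_span_image (b : OrthonormalBasis ι 𝕜 E) {s : Set ι}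
    {x : E} (hx : x ∈ span 𝕜 (b '' s)) {w w' : ι → ℝ} (hw : ∀ i ∈ s, w i ≤ w' i) :
    ∑ i, w i * ‖b.repr x i‖ ^ 2 ≤ ∑ i, w' i * ‖b.repr x i‖ ^ 2 := by
  refine Finset.sum_le_sum fun i _ => ?_
  by_cases hi : i ∈ s
  · exact mul_le_mul_of_nonneg_right (hw i hi) (sq_nonneg _)
  · simp [b.repr_eq_zero_of_mem_span_image hx hi]

theorem norm_sq_eq_sum_norm_repr_sq (b : OrthonormalBasis ι 𝕜 E) (x : E) :
    ‖x‖ ^ 2 = ∑ i, ‖b.repr x i‖ ^ 2 := by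
  rw [← b.repr.norm_map, EuclideanSpace.norm_sq_eq]

end OrthonormalBasis

namespace LinearMap.IsSymmetric

variable {𝕜 E : Type*} [RCLike 𝕜] [NormedAddCommGroup E] [InnerProductSpace 𝕜 E]
  [FiniteDimensional 𝕜 E] {n : ℕ} (hn : finrank 𝕜 E = n)

theorem re_inner_apply_self_eq_sum {T : E →ₗ[𝕜] E} (hT : T.IsSymmetric) (x : E) :
    re ⟪T x, x⟫_𝕜 = ∑ i, hT.eigenvalues hn i * ‖(hT.eigenvectorBasis hn).repr x i‖ ^ 2 := by
  rw [← (hT.eigenvectorBasis hn).repr.inner_map_map, PiLp.inner_apply, map_sum]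
  refine Finset.sum_congr rfl fun i _ => ?_
  rw [eigenvectorBasis_apply_self_apply, RCLike.inner_apply', map_mul (starRingEnd 𝕜),
    conj_ofReal, mul_assoc, RCLike.conj_mul, ← ofReal_pow, re_ofReal_mul, ofReal_re]

theorem eigenvalues_le_of_isPositive_sub {T S : E →ₗ[𝕜] E} (hT : T.IsSymmetric)
    (hS : S.IsSymmetric) (hST : (S - T).IsPositive) (k : Fin n) :
    hT.eigenvalues hn k ≤ hS.eigenvalues hn k := by
  classical
  set U := span 𝕜 (hT.eigenvectorBasis hn '' ↑(Finset.Iic k))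
  set V := span 𝕜 (hS.eigenvectorBasis hn '' ↑(Finset.Ici k))
  have hUV : ¬ Disjoint U V := fun h => by
    have := finrank_add_finrank_le_of_disjoint h
    rw [OrthonormalBasis.finrank_span_image, OrthonormalBasis.finrank_span_image, Fin.card_Iic,
      Fin.card_Ici, hn] at this
    omega
  obtain ⟨x, hxU, hxV, hx⟩ : ∃ x ∈ U, x ∈ V ∧ x ≠ 0 := by
    simpa [disjoint_def] using hUV
  have hlow : hT.eigenvalues hn k * ‖x‖ ^ 2 ≤ re ⟪T x, x⟫_𝕜 := by
    rw [(hT.eigenvectorBasis hn).norm_sq_eq_sum_norm_repr_sq, Finset.mul_sum,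
      hT.re_inner_apply_self_eq_sum hn]
    exact (hT.eigenvectorBasis hn).sum_mul_norm_repr_sq_le_of_mem_span_image hxU
      fun i hi => hT.eigenvalues_antitone hn (Finset.mem_Iic.mp hi)
  have hup : re ⟪S x, x⟫_𝕜 ≤ hS.eigenvalues hn k * ‖x‖ ^ 2 := by
    rw [(hS.eigenvectorBasis hn).norm_sq_eq_sum_norm_repr_sq, Finset.mul_sum,
      hS.re_inner_apply_self_eq_sum hn]
    exact (hS.eigenvectorBasis hn).sum_mul_norm_repr_sq_le_of_mem_span_image hxV
      fun i hi => hS.eigenvalues_antitone hn (Finset.mem_Ici.mp hi)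
  have hmid : re ⟪T x, x⟫_𝕜 ≤ re ⟪S x, x⟫_𝕜 := by
    have := hST.re_inner_nonneg_left x
    rw [sub_apply, inner_sub_left, map_sub] at this
    linarith
  exact le_of_mul_le_mul_right (hlow.trans (hmid.trans hup)) (by positivity)

end LinearMap.IsSymmetric

namespace Matrix

open scoped ComplexOrder

variable {𝕜 : Type*} [RCLike 𝕜] {m n : Type*} [Fintype m]

theorem IsHermitian.sum_comp_eigenvalues_le_of_posSemidef_sub [DecidableEq m]
    {A B : Matrix m m 𝕜} (hA : A.IsHermitian) (hB : B.IsHermitian) (hBA : (B - A).PosSemidef)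
    {g : ℝ → ℝ} (hg : Monotone g) : ∑ i, g (hA.eigenvalues i) ≤ ∑ i, g (hB.eigenvalues i) := by
  have hTS : (toEuclideanLin B - toEuclideanLin A).IsPositive := by
    rw [← map_sub, isPositive_toEuclideanLin_iff]
    exact hBA
  have hsum {C : Matrix m m 𝕜} (hC : C.IsHermitian) :
      ∑ i, g (hC.eigenvalues i) = ∑ k, g (hC.eigenvalues₀ k) :=
    Equiv.sum_comp _ fun k => g (hC.eigenvalues₀ k)
  rw [hsum hA, hsum hB]
  exact Finset.sum_le_sum fun k _ => hg <|
    LinearMap.IsSymmetric.eigenvalues_le_of_isPositive_sub _ _ _ hTS k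

theorem conjTranspose_mul_self_mul_of_isStarProjection {P : Matrix m m 𝕜}
    (hP : IsStarProjection P) (W : Matrix m n 𝕜) : (P * W)ᴴ * (P * W) = Wᴴ * P * W := by
  rw [conjTranspose_mul, ← star_eq_conjTranspose, hP.isSelfAdjoint.star_eq, Matrix.mul_assoc,
    ← Matrix.mul_assoc P, hP.isIdempotentElem.eq, Matrix.mul_assoc]

theorem posSemidef_conjTranspose_mul_self_sub_of_isStarProjection [Finite n] [DecidableEq m]
    {P : Matrix m m 𝕜} (hP : IsStarProjection P) (W : Matrix m n 𝕜) :
    (Wᴴ * W - (P * W)ᴴ * (P * W)).PosSemidef := by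
  have h : Wᴴ * W - (P * W)ᴴ * (P * W) = ((1 - P) * W)ᴴ * ((1 - P) * W) := by
    rw [conjTranspose_mul_self_mul_of_isStarProjection hP,
      conjTranspose_mul_self_mul_of_isStarProjection hP.one_sub, Matrix.mul_sub, Matrix.sub_mul,
      Matrix.mul_one]
  rw [h]
  exact posSemidef_conjTranspose_mul_self _

end Matrix

theorem sum_comp_singVal_mul_le_of_isStarProjection {a b : ℕ} {P : Matrix (Fin a) (Fin a) ℝ}
    (hP : IsStarProjection P) (W : Matrix (Fin a) (Fin b) ℝ) {f : ℝ → ℝ}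
    (hf : MonotoneOn f (Set.Ici 0)) : ∑ j, f (singVal (P * W) j) ≤ ∑ j, f (singVal W j) :=
  Matrix.IsHermitian.sum_comp_eigenvalues_le_of_posSemidef_sub _ _
    (Matrix.posSemidef_conjTranspose_mul_self_sub_of_isStarProjection hP W)
    (g := f ∘ Real.sqrt) fun _ _ hxy =>
      hf (Real.sqrt_nonneg _) (Real.sqrt_nonneg _) (Real.sqrt_le_sqrt hxy)

namespace IsMoorePenrose

variable {a b : ℕ} {X : Matrix (Fin a) (Fin b) ℝ} {Xd : Matrix (Fin b) (Fin a) ℝ}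

theorem isStarProjection_mul (h : IsMoorePenrose X Xd) : IsStarProjection (Xd * X) where
  isIdempotentElem := by
    rw [IsIdempotentElem, Matrix.mul_assoc, ← Matrix.mul_assoc X, h.1]
  isSelfAdjoint := by
    rw [IsSelfAdjoint, Matrix.star_eq_conjTranspose, Matrix.conjTranspose_eq_transpose_of_trivial,
      h.2.2.2]

theorem mul_mul_eq_of_mul_eq (h : IsMoorePenrose X Xd) {c : ℕ} {W : Matrix (Fin b) (Fin c) ℝ}
    {Y : Matrix (Fin a) (Fin c) ℝ} (hW : X * W = Y) : X * (Xd * Y) = Y := by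
  rw [← hW, ← Matrix.mul_assoc, ← Matrix.mul_assoc, h.1]

end IsMoorePenrose

theorem min_schatten_solution_is_pseudoinverse_general
    (N d K L : ℕ)
    (X : Matrix (Fin N) (Fin d) ℝ) (Y : Matrix (Fin N) (Fin K) ℝ)
    (Xd : Matrix (Fin d) (Fin N) ℝ) (hXd : IsMoorePenrose X Xd)
    (hfeas : ∃ W : Matrix (Fin d) (Fin K) ℝ, X * W = Y) :
    X * (Xd * Y) = Y ∧
    IsLeast {x : ℝ | ∃ W : Matrix (Fin d) (Fin K) ℝ, X * W = Y ∧
        x = ∑ i, singVal W i ^ ((2 : ℝ) / L)}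
      (∑ i, singVal (Xd * Y) i ^ ((2 : ℝ) / L)) := by
  obtain ⟨W₀, hW₀⟩ := hfeas
  have hsol : X * (Xd * Y) = Y := hXd.mul_mul_eq_of_mul_eq hW₀
  refine ⟨hsol, ⟨Xd * Y, hsol, rfl⟩, ?_⟩
  rintro _ ⟨W, rfl, rfl⟩
  rw [← Matrix.mul_assoc]
  exact sum_comp_singVal_mul_le_of_isStarProjection hXd.isStarProjection_mul W
    fun _ hx _ _ hxy => Real.rpow_le_rpow hx hxy (by positivity)

/-- If `X W = Y` is feasible then the minimum of
`‖W‖_{S_{2/L}}^{2/L} = ∑ σ_i(W)^{2/L}` over all solutions `W` of `X W = Y` is attained at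
`W = X† Y`, with minimal value `∑ σ_i(X†Y)^{2/L}`. -/
theorem min_schatten_solution_is_pseudoinverse
    (N d K L : ℕ) (hL : 2 ≤ L)
    (X : Matrix (Fin N) (Fin d) ℝ) (Y : Matrix (Fin N) (Fin K) ℝ)
    (Xd : Matrix (Fin d) (Fin N) ℝ) (hXd : IsMoorePenrose X Xd)
    (hfeas : ∃ W : Matrix (Fin d) (Fin K) ℝ, X * W = Y) :
    X * (Xd * Y) = Y ∧
    IsLeast {x : ℝ | ∃ W : Matrix (Fin d) (Fin K) ℝ, X * W = Y ∧
        x = ∑ i, singVal W i ^ ((2 : ℝ) / L)}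
      (∑ i, singVal (Xd * Y) i ^ ((2 : ℝ) / L)) :=
  min_schatten_solution_is_pseudoinverse_general N d K L X Y Xd hXd hfeas
end

section
/- Let X ∈ ℝ^{N×d} satisfy XXᵀ = I_N and let t > 0. Then the union over W₁ ∈ ℝ^{d×m} with ‖W₁‖_F ≤ t of the sets A(W₁) = { ((XW₁)₊ w₂)₊ : ‖w₂‖₂ ≤ 1 } equals { (z)₊ : z ∈ ℝ^N, ‖z‖₂ ≤ t }, where (·)₊ denotes entrywise ReLU. -/
/-!
Whitening makes `Xᵀ` an isometry, hence `X` a contraction, so `‖X W₁‖_F ≤ ‖W₁‖_F`; the inner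
ReLU only shrinks entries and Cauchy–Schwarz gives `‖(X W₁)₊ w₂‖ ≤ ‖(X W₁)₊‖_F ‖w₂‖ ≤ t`.
Conversely, for a nonnegative unit vector `b` the rank-one choice `W₁ = Xᵀ z bᵀ`, `w₂ = b` has
`‖W₁‖_F = ‖z‖` and `(X W₁)₊ b = (z)₊`, and the outer ReLU is idempotent.
-/

open Matrix

/-- Euclidean norm of a vector. -/
noncomputable def vecNorm {n : ℕ} (v : Fin n → ℝ) : ℝ := Real.sqrt (∑ i, (v i) ^ 2)

/-- Entrywise ReLU of a vector. -/
def reluV {n : ℕ} (v : Fin n → ℝ) : Fin n → ℝ := fun i => max (v i) 0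

/-- Entrywise ReLU of a matrix. -/
def reluM {a b : ℕ} (M : Matrix (Fin a) (Fin b) ℝ) : Matrix (Fin a) (Fin b) ℝ :=
  fun i j => max (M i j) 0

lemma dotProduct_self_eq_sum_sq {ι : Type*} [Fintype ι] (v : ι → ℝ) :
    v ⬝ᵥ v = ∑ i, v i ^ 2 := by
  simp only [dotProduct, sq]

lemma vecNorm_eq_sqrt_dotProduct {n : ℕ} (v : Fin n → ℝ) : vecNorm v = √(v ⬝ᵥ v) := by
  rw [vecNorm, dotProduct_self_eq_sum_sq]

lemma frobSq_eq_sum_dotProduct {a b : ℕ} (M : Matrix (Fin a) (Fin b) ℝ) :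
    frobSq M = ∑ i, M i ⬝ᵥ M i := by
  simp only [frobSq, dotProduct_self_eq_sum_sq]

lemma frobSq_transpose {a b : ℕ} (M : Matrix (Fin a) (Fin b) ℝ) : frobSq Mᵀ = frobSq M :=
  Finset.sum_comm

lemma frobSq_nonneg {a b : ℕ} (M : Matrix (Fin a) (Fin b) ℝ) : 0 ≤ frobSq M := by
  unfold frobSq; positivity

lemma dotProduct_mulVec_self_le_frobSq_mul {a b : ℕ} (M : Matrix (Fin a) (Fin b) ℝ)
    (w : Fin b → ℝ) : (M *ᵥ w) ⬝ᵥ (M *ᵥ w) ≤ frobSq M * (w ⬝ᵥ w) := by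
  rw [frobSq_eq_sum_dotProduct, Finset.sum_mul, dotProduct_self_eq_sum_sq]
  refine Finset.sum_le_sum fun i _ => ?_
  rw [dotProduct_self_eq_sum_sq, dotProduct_self_eq_sum_sq]
  exact Finset.sum_mul_sq_le_sq_mul_sq Finset.univ (M i) w

lemma vecNorm_mulVec_le {a b : ℕ} (M : Matrix (Fin a) (Fin b) ℝ) (w : Fin b → ℝ) :
    vecNorm (M *ᵥ w) ≤ √(frobSq M) * vecNorm w := by
  rw [vecNorm_eq_sqrt_dotProduct, vecNorm_eq_sqrt_dotProduct, ← Real.sqrt_mul (frobSq_nonneg M)]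
  exact Real.sqrt_le_sqrt (dotProduct_mulVec_self_le_frobSq_mul M w)

lemma max_zero_sq_le (x : ℝ) : max x 0 ^ 2 ≤ x ^ 2 := by
  rcases le_total x 0 with hx | hx
  · simp [max_eq_right hx, sq_nonneg]
  · rw [max_eq_left hx]

lemma frobSq_reluM_le {a b : ℕ} (M : Matrix (Fin a) (Fin b) ℝ) : frobSq (reluM M) ≤ frobSq M :=
  Finset.sum_le_sum fun i _ => Finset.sum_le_sum fun j _ => max_zero_sq_le (M i j)

section Whitened

variable {ι κ : Type*} [Fintype ι] [Fintype κ] [DecidableEq ι] {X : Matrix ι κ ℝ}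

lemma dotProduct_transpose_mulVec_self (hX : X * Xᵀ = 1) (y : ι → ℝ) :
    (Xᵀ *ᵥ y) ⬝ᵥ (Xᵀ *ᵥ y) = y ⬝ᵥ y := by
  rw [dotProduct_transpose_mulVec, mulVec_mulVec, hX, one_mulVec]

lemma dotProduct_mulVec_self_le (hX : X * Xᵀ = 1) (w : κ → ℝ) :
    (X *ᵥ w) ⬝ᵥ (X *ᵥ w) ≤ w ⬝ᵥ w := by
  set p := Xᵀ *ᵥ (X *ᵥ w)
  have hwp : w ⬝ᵥ p = (X *ᵥ w) ⬝ᵥ (X *ᵥ w) := dotProduct_transpose_mulVec X w (X *ᵥ w)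
  have hpp : p ⬝ᵥ p = (X *ᵥ w) ⬝ᵥ (X *ᵥ w) := dotProduct_transpose_mulVec_self hX _
  -- `‖w‖² - ‖X w‖² = ‖w - Xᵀ X w‖²`
  have h := dotProduct_self_star_nonneg (w - p)
  simp only [star_trivial, sub_dotProduct, dotProduct_sub, dotProduct_comm p w] at h
  linarith

end Whitened

lemma frobSq_mul_le {N d m : ℕ} {X : Matrix (Fin N) (Fin d) ℝ} (hX : X * Xᵀ = 1)
    (W : Matrix (Fin d) (Fin m) ℝ) : frobSq (X * W) ≤ frobSq W := by
  rw [← frobSq_transpose, ← frobSq_transpose W, frobSq_eq_sum_dotProduct, frobSq_eq_sum_dotProduct]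
  refine Finset.sum_le_sum fun k _ => ?_
  have hcol : (X * W)ᵀ k = X *ᵥ Wᵀ k := by
    ext i; simp [mul_apply, mulVec, dotProduct]
  rw [hcol]
  exact dotProduct_mulVec_self_le hX _

lemma frobSq_vecMulVec {a b : ℕ} (u : Fin a → ℝ) (v : Fin b → ℝ) :
    frobSq (vecMulVec u v) = (u ⬝ᵥ u) * (v ⬝ᵥ v) := by
  simp only [frobSq, vecMulVec_apply, dotProduct_self_eq_sum_sq, mul_pow, Finset.sum_mul_sum]

lemma reluM_vecMulVec {a b : ℕ} (u : Fin a → ℝ) {v : Fin b → ℝ} (hv : 0 ≤ v) :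
    reluM (vecMulVec u v) = vecMulVec (reluV u) v := by
  ext i j
  simp [reluM, reluV, vecMulVec_apply, max_mul_of_nonneg _ _ (hv j)]

lemma reluV_reluV {n : ℕ} (v : Fin n → ℝ) : reluV (reluV v) = reluV v := by
  ext i; simp [reluV]

theorem relu_reachable_set_whitened_general
    (N d m : ℕ) (hm : 1 ≤ m) (t : ℝ)
    (X : Matrix (Fin N) (Fin d) ℝ) (hX : X * Xᵀ = 1) :
    {v : Fin N → ℝ | ∃ W₁ : Matrix (Fin d) (Fin m) ℝ,
        Real.sqrt (frobSq W₁) ≤ t ∧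
        ∃ w₂ : Fin m → ℝ, vecNorm w₂ ≤ 1 ∧ v = reluV ((reluM (X * W₁)).mulVec w₂)} =
    {v : Fin N → ℝ | ∃ z : Fin N → ℝ, vecNorm z ≤ t ∧ v = reluV z} := by
  ext v
  constructor
  · rintro ⟨W₁, hW₁, w₂, hw₂, rfl⟩
    refine ⟨_, ?_, rfl⟩
    calc vecNorm (reluM (X * W₁) *ᵥ w₂) ≤ √(frobSq (reluM (X * W₁))) * vecNorm w₂ :=
          vecNorm_mulVec_le _ _
      _ ≤ √(frobSq W₁) * 1 := by
          gcongr
          · exact Real.sqrt_nonneg _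
          · exact (frobSq_reluM_le _).trans (frobSq_mul_le hX W₁)
      _ ≤ t := by rwa [mul_one]
  · rintro ⟨z, hz, rfl⟩
    set b : Fin m → ℝ := Pi.single ⟨0, hm⟩ 1
    have hb : b ⬝ᵥ b = 1 := by simp [b]
    refine ⟨vecMulVec (Xᵀ *ᵥ z) b, ?_, b, ?_, ?_⟩
    · rwa [frobSq_vecMulVec, dotProduct_transpose_mulVec_self hX, hb, mul_one,
        ← vecNorm_eq_sqrt_dotProduct]
    · rw [vecNorm_eq_sqrt_dotProduct, hb, Real.sqrt_one]
    · rw [mul_vecMulVec, mulVec_mulVec, hX, one_mulVec,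
        reluM_vecMulVec _ (Pi.single_nonneg.2 zero_le_one), vecMulVec_mulVec, hb,
        MulOpposite.op_one, one_smul, reluV_reluV]

/-- For whitened data (`X Xᵀ = I_N`) and `t > 0`, the union over
`‖W₁‖_F ≤ t` of the sets `A(W₁) = { ((X W₁)₊ w₂)₊ : ‖w₂‖₂ ≤ 1 }` equals
`{ (z)₊ : ‖z‖₂ ≤ t }`. -/
theorem relu_reachable_set_whitened
    (N d m : ℕ) (hm : 1 ≤ m) (t : ℝ) (ht : 0 < t)
    (X : Matrix (Fin N) (Fin d) ℝ) (hX : X * Xᵀ = 1) :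
    {v : Fin N → ℝ | ∃ W₁ : Matrix (Fin d) (Fin m) ℝ,
        Real.sqrt (frobSq W₁) ≤ t ∧
        ∃ w₂ : Fin m → ℝ, vecNorm w₂ ≤ 1 ∧ v = reluV ((reluM (X * W₁)).mulVec w₂)} =
    {v : Fin N → ℝ | ∃ z : Fin N → ℝ, vecNorm z ≤ t ∧ v = reluV z} :=
  relu_reachable_set_whitened_general N d m hm t X hX
end

section
/- Verification of dual feasibility: let u_1,...,u_{2K} ∈ ℝ^N_{≥0} be pairwise orthogonal unit vectors, pair them as (u_{2j−1}, u_{2j}), and set λ_j = u_{2j−1} − u_{2j}. Then for any z ∈ ℝ^N with ‖z‖₂ ≤ 1, we have ∑_{j=1}^K (λ_jᵀ(z)₊)² ≤ 1. -/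
lemma vecNorm_sq {n : ℕ} (v : Fin n → ℝ) : vecNorm v ^ 2 = v ⬝ᵥ v := by
  rw [vecNorm, Real.sq_sqrt (by positivity)]
  simp only [dotProduct, sq]

lemma dotProduct_self_reluV_le {n : ℕ} (v : Fin n → ℝ) : reluV v ⬝ᵥ reluV v ≤ v ⬝ᵥ v := by
  refine Finset.sum_le_sum fun i _ => ?_
  rcases le_total (v i) 0 with h | h
  · simp only [reluV, max_eq_right h, mul_zero]
    exact mul_self_nonneg _
  · simp only [reluV, max_eq_left h, le_refl]

lemma sq_sub_le_sq_add_sq {a b : ℝ} (ha : 0 ≤ a) (hb : 0 ≤ b) : (a - b) ^ 2 ≤ a ^ 2 + b ^ 2 := by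
  nlinarith [mul_nonneg ha hb]

theorem sum_sq_dotProduct_le {ι n : Type*} [Fintype ι] [DecidableEq ι] [Fintype n]
    {u : ι → n → ℝ} (hu : ∀ s s', u s ⬝ᵥ u s' = if s = s' then 1 else 0) (w : n → ℝ) :
    ∑ s, (u s ⬝ᵥ w) ^ 2 ≤ w ⬝ᵥ w := by
  have horth : Orthonormal ℝ fun s => WithLp.toLp 2 (u s) := by
    rw [orthonormal_iff_ite]
    intro s s'
    rw [EuclideanSpace.inner_toLp_toLp, star_trivial, dotProduct_comm, hu]
  have hbessel := horth.sum_inner_products_le (s := Finset.univ) (WithLp.toLp 2 w)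
  simp only [Real.norm_eq_abs, sq_abs, EuclideanSpace.inner_toLp_toLp, star_trivial,
    dotProduct_comm w (u _), EuclideanSpace.norm_sq_eq] at hbessel
  simpa only [dotProduct, sq] using hbessel

/-- dual feasibility: let `u s`, for `s : Fin K ⊕ Fin K`, be `2K` pairwise
orthogonal nonnegative unit vectors in `ℝ^N`, paired as `(u (inl j), u (inr j))`, and set
`λ_j = u (inl j) − u (inr j)`. Then for any `z` with `‖z‖₂ ≤ 1`,
`∑_j (λ_jᵀ (z)₊)² ≤ 1`. -/
theorem relu_dual_feasibility
    (N K : ℕ) (u : (Fin K ⊕ Fin K) → Fin N → ℝ)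
    (hnn : ∀ s i, 0 ≤ u s i)
    (hunit : ∀ s, vecNorm (u s) = 1)
    (horth : ∀ s s', s ≠ s' → ∑ i, u s i * u s' i = 0)
    (z : Fin N → ℝ) (hz : vecNorm z ≤ 1) :
    ∑ j : Fin K, (∑ i, (u (Sum.inl j) i - u (Sum.inr j) i) * reluV z i) ^ 2 ≤ 1 := by
  set w := reluV z
  have hu : ∀ s s', u s ⬝ᵥ u s' = if s = s' then 1 else 0 := by
    intro s s'
    split_ifs with h
    · rw [h, ← vecNorm_sq, hunit, one_pow]
    · exact horth s s' h
  have hw : w ⬝ᵥ w ≤ 1 :=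
    (dotProduct_self_reluV_le z).trans
      ((vecNorm_sq z).symm.trans_le (pow_le_one₀ (Real.sqrt_nonneg _) hz))
  have hpos : ∀ s, 0 ≤ u s ⬝ᵥ w := fun s =>
    Finset.sum_nonneg fun i _ => mul_nonneg (hnn s i) (le_max_right _ _)
  calc ∑ j : Fin K, (∑ i, (u (Sum.inl j) i - u (Sum.inr j) i) * w i) ^ 2
      = ∑ j : Fin K, (u (Sum.inl j) ⬝ᵥ w - u (Sum.inr j) ⬝ᵥ w) ^ 2 := by
        simp only [dotProduct, sub_mul, Finset.sum_sub_distrib]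
    _ ≤ ∑ j : Fin K, ((u (Sum.inl j) ⬝ᵥ w) ^ 2 + (u (Sum.inr j) ⬝ᵥ w) ^ 2) :=
        Finset.sum_le_sum fun j _ => sq_sub_le_sq_add_sq (hpos _) (hpos _)
    _ = ∑ s, (u s ⬝ᵥ w) ^ 2 := by rw [Fintype.sum_sum_type, Finset.sum_add_distrib]
    _ ≤ w ⬝ᵥ w := sum_sq_dotProduct_le hu w
    _ ≤ 1 := hw
end
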